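/- arXiv:2306.00120 — 2 statements merged into one kernel-verified Lean document; each statement's English description precedes it below -/
import Mathlib

section
/- Consider a full binary tree T with n leaves, each leaf i assigned a positive weight p_i and a positive area a_i. Suppose that at every internal node v, the sum of areas of leaves in the left subtree of v and the sum of areas of leaves in the right subtree of v are in the same ratio as the corresponding sums of weights. Then the leaf areas are globally proportional to the leaf weights: a_i / (∑_j a_j) = p_i / (∑_j p_j) for every leaf i. -/
/-- A full binary tree whose leaves carry natural-number labels. -/
inductive FullBTree where
  | leaf : ℕ → FullBTree
  | node : FullBTree → FullBTree → FullBTree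

namespace FullBTree

/-- The list of leaf labels of a tree. -/
def leaves : FullBTree → List ℕ
  | leaf i => [i]
  | node L R => L.leaves ++ R.leaves

/-- Sum of a function over the leaves of a tree. -/
def leafSum (f : ℕ → ℝ) : FullBTree → ℝ
  | leaf i => f i
  | node L R => leafSum f L + leafSum f R

/-- At every internal node, the left/right subtree area totals are in the same
ratio as the corresponding weight totals. -/
def LocalRatioOK (a p : ℕ → ℝ) : FullBTree → Prop
  | leaf _ => True
  | node L R =>
      (leafSum a L) * (leafSum p R) = (leafSum a R) * (leafSum p L) ∧
      LocalRatioOK a p L ∧ LocalRatioOK a p R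

end FullBTree

lemma leafSum_pos (f : ℕ → ℝ) (T : FullBTree) (hf : ∀ i ∈ T.leaves, 0 < f i) :
    0 < FullBTree.leafSum f T := by
  induction T with
  | leaf i => exact hf i (by simp [FullBTree.leaves])
  | node L R ihL ihR =>
      have hL := ihL (fun i hi => hf i (by simp [FullBTree.leaves, hi]))
      have hR := ihR (fun i hi => hf i (by simp [FullBTree.leaves, hi]))
      simpa [FullBTree.leafSum] using add_pos hL hR

lemma cross_mul (T : FullBTree) (a p : ℕ → ℝ)
    (ha : ∀ i ∈ T.leaves, 0 < a i) (hp : ∀ i ∈ T.leaves, 0 < p i)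
    (hlocal : FullBTree.LocalRatioOK a p T) :
    ∀ i ∈ T.leaves,
      a i * FullBTree.leafSum p T = p i * FullBTree.leafSum a T := by
  induction T with
  | leaf j =>
      intro i hi
      simp [FullBTree.leaves] at hi
      subst hi
      simp [FullBTree.leafSum, mul_comm]
  | node L R ihL ihR =>
      obtain ⟨hcross, hlL, hlR⟩ := hlocal
      have haL : ∀ i ∈ L.leaves, 0 < a i := fun i hi => ha i (by simp [FullBTree.leaves, hi])
      have hpL : ∀ i ∈ L.leaves, 0 < p i := fun i hi => hp i (by simp [FullBTree.leaves, hi])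
      have haR : ∀ i ∈ R.leaves, 0 < a i := fun i hi => ha i (by simp [FullBTree.leaves, hi])
      have hpR : ∀ i ∈ R.leaves, 0 < p i := fun i hi => hp i (by simp [FullBTree.leaves, hi])
      have hpLpos := leafSum_pos p L hpL
      have hpRpos := leafSum_pos p R hpR
      intro i hi
      simp only [FullBTree.leaves, List.mem_append] at hi
      simp only [FullBTree.leafSum]
      rcases hi with hi | hi
      · have h1 := ihL haL hpL hlL i hi
        -- a i * pR = p i * aR
        have h2 : a i * FullBTree.leafSum p R * FullBTree.leafSum p L
            = p i * FullBTree.leafSum a R * FullBTree.leafSum p L := by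
          calc a i * FullBTree.leafSum p R * FullBTree.leafSum p L
              = (a i * FullBTree.leafSum p L) * FullBTree.leafSum p R := by ring
            _ = (p i * FullBTree.leafSum a L) * FullBTree.leafSum p R := by rw [h1]
            _ = p i * (FullBTree.leafSum a L * FullBTree.leafSum p R) := by ring
            _ = p i * (FullBTree.leafSum a R * FullBTree.leafSum p L) := by rw [hcross]
            _ = p i * FullBTree.leafSum a R * FullBTree.leafSum p L := by ring
        have h3 := mul_right_cancel₀ (ne_of_gt hpLpos) h2
        nlinarith [h1, h3]
      · have h1 := ihR haR hpR hlR i hi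
        have h2 : a i * FullBTree.leafSum p L * FullBTree.leafSum p R
            = p i * FullBTree.leafSum a L * FullBTree.leafSum p R := by
          calc a i * FullBTree.leafSum p L * FullBTree.leafSum p R
              = (a i * FullBTree.leafSum p R) * FullBTree.leafSum p L := by ring
            _ = (p i * FullBTree.leafSum a R) * FullBTree.leafSum p L := by rw [h1]
            _ = p i * (FullBTree.leafSum a R * FullBTree.leafSum p L) := by ring
            _ = p i * (FullBTree.leafSum a L * FullBTree.leafSum p R) := by rw [hcross]
            _ = p i * FullBTree.leafSum a L * FullBTree.leafSum p R := by ring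
        have h3 := mul_right_cancel₀ (ne_of_gt hpRpos) h2
        nlinarith [h1, h3]

theorem proportion_preservation (T : FullBTree) (a p : ℕ → ℝ)
    (ha : ∀ i ∈ T.leaves, 0 < a i) (hp : ∀ i ∈ T.leaves, 0 < p i)
    (hlocal : FullBTree.LocalRatioOK a p T) :
    ∀ i ∈ T.leaves,
      a i / FullBTree.leafSum a T = p i / FullBTree.leafSum p T := by
  intro i hi
  have hA := leafSum_pos a T ha
  have hP := leafSum_pos p T hp
  have h := cross_mul T a p ha hp hlocal i hi
  field_simp
  linarith [h]
end

section
/- Let m rectangles inside a rectangle R arise from expanding m axis-parallel splitting segments of lengths l_1,...,l_m into bands of width 2d, and suppose the bands pairwise intersect in J axis-aligned square junctions of side 2d, with no three bands sharing a common point and no two parallel bands overlapping. Then the area of the union of the bands equals 2d·(∑_{i=1}^m l_i) − 4d²·J. -/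
open MeasureTheory

theorem border_area_formula (m : ℕ) (d : ℝ) (hd : 0 < d)
    (l : Fin m → ℝ) (hl : ∀ i, 0 < l i)
    (B : Fin m → Set (ℝ × ℝ))
    (hmeas : ∀ i, MeasurableSet (B i))
    (hband : ∀ i, volume (B i) = ENNReal.ofReal (2 * d * l i))
    (J : Finset (Fin m × Fin m))
    (hJlt : ∀ q ∈ J, q.1 < q.2)
    (hjunction : ∀ q ∈ J, volume (B q.1 ∩ B q.2) = ENNReal.ofReal (4 * d ^ 2))
    (hdisj : ∀ i j : Fin m, i < j → (i, j) ∉ J → B i ∩ B j = ∅)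
    (htriple : ∀ i j k : Fin m, i ≠ j → j ≠ k → i ≠ k →
      B i ∩ B j ∩ B k = ∅) :
    volume (⋃ i, B i)
      = ENNReal.ofReal (2 * d * (∑ i, l i) - 4 * d ^ 2 * (J.card : ℝ)) := by
  set c := ENNReal.ofReal (4 * d ^ 2) with hc
  -- pairwise intersections
  have hpair : ∀ a i : Fin m, a ≠ i →
      volume (B a ∩ B i) = if (a, i) ∈ J ∨ (i, a) ∈ J then c else 0 := by
    intro a i hne
    by_cases h : (a, i) ∈ J ∨ (i, a) ∈ J
    · rw [if_pos h]
      rcases h with h | h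
      · exact hjunction _ h
      · rw [Set.inter_comm]; exact hjunction _ h
    · rw [if_neg h]
      push_neg at h
      rcases lt_or_gt_of_ne hne with hlt | hlt
      · rw [hdisj a i hlt h.1]; simp
      · rw [Set.inter_comm, hdisj i a hlt h.2]; simp
  have key : ∀ s : Finset (Fin m),
      volume (⋃ i ∈ s, B i)
        + (J.filter (fun q => q.1 ∈ s ∧ q.2 ∈ s)).card • c
      = ∑ i ∈ s, volume (B i) := by
    intro s
    induction s using Finset.induction_on with
    | empty => simp
    | @insert a s ha ih =>
      have hUmeas : MeasurableSet (⋃ i ∈ s, B i) :=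
        MeasurableSet.biUnion s.countable_toSet (fun i _ => hmeas i)
      have hU : (⋃ i ∈ insert a s, B i) = B a ∪ ⋃ i ∈ s, B i := by
        simp [Finset.set_biUnion_insert]
      -- the "new" pairs
      set N := s.filter (fun i => (a, i) ∈ J ∨ (i, a) ∈ J) with hN
      have h2 : volume (B a ∩ ⋃ i ∈ s, B i) = N.card • c := by
        have : (B a ∩ ⋃ i ∈ s, B i) = ⋃ i ∈ s, B a ∩ B i := by
          ext x; simp [Set.mem_iUnion]
        rw [this]
        rw [measure_biUnion_finset ?disj (fun i _ => (hmeas a).inter (hmeas i))]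
        case disj =>
          intro i hi j hj hij
          have h1 : a ≠ i := fun h => ha (h ▸ hi)
          have h2 : a ≠ j := fun h => ha (h ▸ hj)
          refine Set.disjoint_left.2 (fun x hx hx' => ?_)
          have : x ∈ B i ∩ B j ∩ B a := ⟨⟨hx.2, hx'.2⟩, hx.1⟩
          rw [htriple i j a hij (Ne.symm h2) (Ne.symm h1)] at this
          exact this
        have : ∀ i ∈ s, volume (B a ∩ B i)
            = if (a, i) ∈ J ∨ (i, a) ∈ J then c else 0 := by
          intro i hi
          exact hpair a i (fun h => ha (h ▸ hi))
        rw [Finset.sum_congr rfl this, ← Finset.sum_filter, Finset.sum_const]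
      -- splitting the filtered junction set
      have h3 : (J.filter (fun q => q.1 ∈ insert a s ∧ q.2 ∈ insert a s)).card
          = (J.filter (fun q => q.1 ∈ s ∧ q.2 ∈ s)).card + N.card := by
        have hsplit : J.filter (fun q => q.1 ∈ insert a s ∧ q.2 ∈ insert a s)
            = J.filter (fun q => q.1 ∈ s ∧ q.2 ∈ s)
              ∪ J.filter (fun q => (q.1 = a ∧ q.2 ∈ s) ∨ (q.1 ∈ s ∧ q.2 = a)) := by
          ext q
          simp only [Finset.mem_filter, Finset.mem_insert, Finset.mem_union]
          constructor
          · rintro ⟨hq, h1 | h1, h2 | h2⟩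
            · exact absurd (h1 ▸ h2 ▸ hJlt q hq) (lt_irrefl _)
            · exact Or.inr ⟨hq, Or.inl ⟨h1, h2⟩⟩
            · exact Or.inr ⟨hq, Or.inr ⟨h1, h2⟩⟩
            · exact Or.inl ⟨hq, h1, h2⟩
          · rintro (⟨hq, h1, h2⟩ | ⟨hq, ⟨h1, h2⟩ | ⟨h1, h2⟩⟩)
            · exact ⟨hq, Or.inr h1, Or.inr h2⟩
            · exact ⟨hq, Or.inl h1, Or.inr h2⟩
            · exact ⟨hq, Or.inr h1, Or.inl h2⟩
        have hdisjf : Disjoint (J.filter (fun q => q.1 ∈ s ∧ q.2 ∈ s))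
            (J.filter (fun q => (q.1 = a ∧ q.2 ∈ s) ∨ (q.1 ∈ s ∧ q.2 = a))) := by
          rw [Finset.disjoint_left]
          rintro q hq hq'
          simp only [Finset.mem_filter] at hq hq'
          rcases hq'.2 with ⟨h1, _⟩ | ⟨_, h2⟩
          · exact ha (h1 ▸ hq.2.1)
          · exact ha (h2 ▸ hq.2.2)
        rw [hsplit, Finset.card_union_of_disjoint hdisjf]
        congr 1
        -- bijection between new pairs and N
        refine Finset.card_bij (fun q _ => if q.1 = a then q.2 else q.1) ?_ ?_ ?_
        · rintro q hq
          simp only [Finset.mem_filter] at hq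
          rcases hq.2 with ⟨h1, h2⟩ | ⟨h1, h2⟩
          · simp only [if_pos h1, hN, Finset.mem_filter]
            refine ⟨h2, Or.inl ?_⟩
            have he : (a, q.2) = q := Prod.ext h1.symm rfl
            rw [he]; exact hq.1
          · have hne : q.1 ≠ a := fun h => ha (h ▸ h1)
            simp only [if_neg hne, hN, Finset.mem_filter]
            refine ⟨h1, Or.inr ?_⟩
            have he : (q.1, a) = q := Prod.ext rfl h2.symm
            rw [he]; exact hq.1
        · rintro q hq q' hq' heq
          simp only [Finset.mem_filter] at hq hq'
          rcases hq.2 with ⟨h1, h2⟩ | ⟨h1, h2⟩ <;>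
            rcases hq'.2 with ⟨h1', h2'⟩ | ⟨h1', h2'⟩
          · simp only [if_pos h1, if_pos h1'] at heq
            exact Prod.ext (h1.trans h1'.symm) heq
          · have hne' : q'.1 ≠ a := fun h => ha (h ▸ h1')
            simp only [if_pos h1, if_neg hne'] at heq
            -- q = (a, x), q' = (x, a) both in J : contradiction
            have hq1 : q = (a, q'.1) := Prod.ext h1 heq
            have hq2 : q' = (q'.1, a) := Prod.ext rfl h2'
            have l1 := hJlt q hq.1
            have l2 := hJlt q' hq'.1
            rw [hq1] at l1; rw [hq2] at l2
            exact absurd (l1.trans l2) (lt_irrefl _)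
          · have hne : q.1 ≠ a := fun h => ha (h ▸ h1)
            simp only [if_neg hne, if_pos h1'] at heq
            have hq1 : q = (q.1, a) := Prod.ext rfl h2
            have hq2 : q' = (a, q.1) := Prod.ext h1' heq.symm
            have l1 := hJlt q hq.1
            have l2 := hJlt q' hq'.1
            rw [hq1] at l1; rw [hq2] at l2
            exact absurd (l1.trans l2) (lt_irrefl _)
          · have hne : q.1 ≠ a := fun h => ha (h ▸ h1)
            have hne' : q'.1 ≠ a := fun h => ha (h ▸ h1')
            simp only [if_neg hne, if_neg hne'] at heq
            exact Prod.ext heq (h2.trans h2'.symm)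
        · rintro x hx
          simp only [hN, Finset.mem_filter] at hx
          rcases hx.2 with h | h
          · refine ⟨(a, x), ?_, ?_⟩
            · simp [Finset.mem_filter, h, hx.1]
            · simp
          · have hxa : x ≠ a := fun hh => ha (hh ▸ hx.1)
            refine ⟨(x, a), ?_, ?_⟩
            · simp [Finset.mem_filter, h, hx.1]
            · simp [hxa]
      have h1 : volume (B a ∪ ⋃ i ∈ s, B i) + volume (B a ∩ ⋃ i ∈ s, B i)
          = volume (B a) + volume (⋃ i ∈ s, B i) :=
        measure_union_add_inter (B a) hUmeas
      rw [Finset.sum_insert ha, hU, h3, add_nsmul, ← ih]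
      rw [h2] at h1
      calc volume (B a ∪ ⋃ i ∈ s, B i)
            + ((J.filter (fun q => q.1 ∈ s ∧ q.2 ∈ s)).card • c + N.card • c)
          = (volume (B a ∪ ⋃ i ∈ s, B i) + N.card • c)
            + (J.filter (fun q => q.1 ∈ s ∧ q.2 ∈ s)).card • c := by ring
        _ = (volume (B a) + volume (⋃ i ∈ s, B i))
            + (J.filter (fun q => q.1 ∈ s ∧ q.2 ∈ s)).card • c := by rw [h1]
        _ = volume (B a) + (volume (⋃ i ∈ s, B i)
            + (J.filter (fun q => q.1 ∈ s ∧ q.2 ∈ s)).card • c) := by ring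
  -- apply with s = univ
  have hkey := key Finset.univ
  have hU : (⋃ i ∈ (Finset.univ : Finset (Fin m)), B i) = ⋃ i, B i := by simp
  rw [hU, show (J.filter fun q : Fin m × Fin m => q.1 ∈ Finset.univ ∧ q.2 ∈ Finset.univ) = J
    by simp] at hkey
  have hsum : ∑ i, volume (B i) = ENNReal.ofReal (2 * d * ∑ i, l i) := by
    rw [Finset.mul_sum, ENNReal.ofReal_sum_of_nonneg (fun i _ => mul_nonneg (by linarith) (hl i).le)]
    exact Finset.sum_congr rfl (fun i _ => hband i)
  have hsmul : (J.card : ℕ) • c = ENNReal.ofReal (4 * d ^ 2 * (J.card : ℝ)) := by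
    rw [hc, nsmul_eq_mul, ← ENNReal.ofReal_natCast, ← ENNReal.ofReal_mul (by positivity)]
    ring_nf
  rw [hsum, hsmul] at hkey
  have hb : (0:ℝ) ≤ 4 * d ^ 2 * (J.card : ℝ) := by positivity
  have ht : (0:ℝ) ≤ 2 * d * ∑ i, l i := by
    have : 0 ≤ ∑ i, l i := Finset.sum_nonneg (fun i _ => (hl i).le)
    positivity
  have hle : 4 * d ^ 2 * (J.card : ℝ) ≤ 2 * d * ∑ i, l i := by
    have : ENNReal.ofReal (4 * d ^ 2 * (J.card : ℝ))
        ≤ ENNReal.ofReal (2 * d * ∑ i, l i) := by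
      rw [← hkey]; exact le_add_self
    exact (ENNReal.ofReal_le_ofReal_iff ht).1 this
  rw [ENNReal.ofReal_sub _ hb]
  exact ENNReal.eq_sub_of_add_eq (ENNReal.ofReal_ne_top) hkey
end
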